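/- There exists an absolute constant C_1 > 0 such that for every irrational x ∈ (0,1) and every N ≥ 0, | Σ_{n=0}^{N} log(q_{n+1})/q_n − Σ_{n=0}^{N} log(a_{n+1})/q_n | < C_1. In particular, Σ_{n=0}^∞ log(q_{n+1})/q_n and Σ_{n=0}^∞ log(a_{n+1})/q_n are simultaneously finite or infinite, and when finite their difference is bounded by C_1. -/

import Mathlib

open Set Filter

/-- The Gauss map `G(t) = 1/t − ⌊1/t⌋`. -/
noncomputable def gmap (t : ℝ) : ℝ := 1 / t - ⌊1 / t⌋

/-- `ra y n = a_{n+1}(y) = ⌊1/G^n(y)⌋`, the regular continued fraction partial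
quotients of `y`. -/
noncomputable def ra (y : ℝ) (n : ℕ) : ℤ := ⌊1 / (gmap^[n] y)⌋

/-- `qcf y (n+1) = q_n`, with `q_{-1} = 0`, `q_0 = 1` and
`q_{n+1} = a_{n+1}·q_n + q_{n−1}`: the denominators of the regular convergents. -/
noncomputable def qcf (y : ℝ) : ℕ → ℤ
  | 0 => 0
  | 1 => 1
  | n + 2 => ra y n * qcf y (n + 1) + qcf y n

/-!
Since `q_{n+1} = a_{n+1} q_n + q_{n-1}` lies between `a_{n+1} q_n` and `2 a_{n+1} q_n`, the
`n`-th term of the difference is `log (q_{n+1} / a_{n+1}) / q_n ∈ [0, log (2 q_n) / q_n]`.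
As `log y ≤ 2 √y` and `q_{n+2} ≥ 2 q_n`, this is `O(2^{-n/4})`, so the partial sums are bounded
by a convergent geometric series.
-/

open Real

lemma irrational_gmap {t : ℝ} (ht : Irrational t) : Irrational (gmap t) :=
  (one_div t ▸ ht.inv).sub_intCast _

lemma gmap_mem_Ioo {t : ℝ} (ht : Irrational t) : gmap t ∈ Ioo 0 1 :=
  ⟨(Int.fract_nonneg (1 / t)).lt_of_ne fun h ↦
      (irrational_gmap ht).ne_rat 0 (by simpa [gmap] using h.symm),
    Int.fract_lt_one (1 / t)⟩

lemma irrational_gmap_iterate {t : ℝ} (ht : Irrational t) (n : ℕ) :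
    Irrational (gmap^[n] t) := by
  induction n with
  | zero => exact ht
  | succ n ih => rw [Function.iterate_succ_apply']; exact irrational_gmap ih

lemma gmap_iterate_mem_Ioo {x : ℝ} (hx : Irrational x) (hx01 : x ∈ Ioo 0 1) (n : ℕ) :
    gmap^[n] x ∈ Ioo 0 1 := by
  cases n with
  | zero => exact hx01
  | succ n =>
    rw [Function.iterate_succ_apply']
    exact gmap_mem_Ioo (irrational_gmap_iterate hx n)

lemma one_le_ra {x : ℝ} (hx : Irrational x) (hx01 : x ∈ Ioo 0 1) (n : ℕ) : 1 ≤ ra x n := by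
  obtain ⟨h0, h1⟩ := gmap_iterate_mem_Ioo hx hx01 n
  rw [ra, Int.le_floor]
  exact_mod_cast (one_lt_one_div h0 h1).le

lemma log_le_two_mul_sqrt {y : ℝ} (hy : 0 ≤ y) : log y ≤ 2 * √y := by
  simpa [sqrt_eq_rpow, div_eq_mul_inv, mul_comm] using log_le_rpow_div hy one_half_pos

lemma log_div_sub_log_div_le {a q Q : ℝ} (ha : 0 < a) (hq : 0 < q) (hQ₀ : 0 < Q)
    (hQ : Q ≤ 2 * a * q) : log Q / q - log a / q ≤ 2 * √2 / √q := by
  have hlog : log Q - log a ≤ log (2 * q) := by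
    rw [← log_div hQ₀.ne' ha.ne']
    exact log_le_log (by positivity) ((div_le_iff₀' ha).2 (by linarith))
  have hsqrt : √(2 * q) = √2 * √q := sqrt_mul zero_le_two q
  rw [div_sub_div_same, div_le_div_iff₀ hq (sqrt_pos.2 hq)]
  calc (log Q - log a) * √q ≤ 2 * √(2 * q) * √q := by
        gcongr; exact hlog.trans (log_le_two_mul_sqrt (by positivity))
    _ = 2 * √2 * (√q * √q) := by rw [hsqrt]; ring
    _ = 2 * √2 * q := by rw [mul_self_sqrt hq.le]

lemma geom_sum_lt_inv_one_sub {K : Type*} [Field K] [LinearOrder K] [IsStrictOrderedRing K]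
    {r : K} (h₀ : 0 < r) (h₁ : r < 1) (n : ℕ) : ∑ i ∈ Finset.range n, r ^ i < (1 - r)⁻¹ := by
  rw [geom_sum_eq h₁.ne, ← neg_div_neg_eq, neg_sub, neg_sub, div_lt_iff₀ (sub_pos.2 h₁),
    inv_mul_cancel₀ (sub_pos.2 h₁).ne']
  linarith [pow_pos h₀ n]

lemma one_lt_sqrt_sqrt_two : 1 < √√2 := by
  rw [← sqrt_one]; gcongr; exact one_lt_sqrt_two

lemma sqrt_sqrt_two_pow_le {q : ℕ → ℝ} (h₀ : 1 ≤ q 0) (h₁ : 1 ≤ q 1)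
    (h₂ : ∀ n, 2 * q n ≤ q (n + 2)) (n : ℕ) : √√2 ^ n ≤ √√2 * √(q n) := by
  have hρ := one_lt_sqrt_sqrt_two
  induction n using Nat.twoStepInduction with
  | zero => simpa using one_le_mul_of_one_le_of_one_le hρ.le (one_le_sqrt.2 h₀)
  | one => simpa using one_le_sqrt.2 h₁
  | more n ih _ =>
    calc √√2 ^ (n + 2) = √2 * √√2 ^ n := by
          rw [pow_add, sq_sqrt (sqrt_nonneg 2), mul_comm]
      _ ≤ √2 * (√√2 * √(q n)) := by gcongr
      _ = √√2 * √(2 * q n) := by rw [sqrt_mul zero_le_two]; ring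
      _ ≤ √√2 * √(q (n + 2)) := by gcongr; exact h₂ n

section Denominators

variable {x : ℝ}

lemma qcf_nonneg (ha : ∀ n, 1 ≤ ra x n) (n : ℕ) : 0 ≤ qcf x n := by
  induction n using Nat.twoStepInduction with
  | zero => simp [qcf]
  | one => simp [qcf]
  | more n ih₀ ih₁ =>
    have := ha n
    rw [qcf]
    positivity

lemma qcf_succ_le_ra_mul_qcf_succ (ha : ∀ n, 1 ≤ ra x n) (n : ℕ) :
    qcf x (n + 1) ≤ ra x n * qcf x (n + 1) :=
  le_mul_of_one_le_left (qcf_nonneg ha (n + 1)) (ha n)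

lemma qcf_le_qcf_succ (ha : ∀ n, 1 ≤ ra x n) (n : ℕ) : qcf x n ≤ qcf x (n + 1) := by
  cases n with
  | zero => simp [qcf]
  | succ n =>
    rw [qcf]
    linarith [qcf_succ_le_ra_mul_qcf_succ ha n, qcf_nonneg ha n]

lemma one_le_qcf_succ (ha : ∀ n, 1 ≤ ra x n) (n : ℕ) : 1 ≤ qcf x (n + 1) := by
  induction n with
  | zero => simp [qcf]
  | succ n ih => exact ih.trans (qcf_le_qcf_succ ha (n + 1))

lemma two_mul_qcf_le_qcf_add_two (ha : ∀ n, 1 ≤ ra x n) (n : ℕ) :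
    2 * qcf x n ≤ qcf x (n + 2) := by
  rw [qcf]
  linarith [qcf_succ_le_ra_mul_qcf_succ ha n, qcf_le_qcf_succ ha n]

lemma ra_mul_qcf_le_qcf_add_two (ha : ∀ n, 1 ≤ ra x n) (n : ℕ) :
    ra x n * qcf x (n + 1) ≤ qcf x (n + 2) := by
  rw [qcf]
  linarith [qcf_nonneg ha n]

lemma qcf_add_two_le_two_mul_ra_mul_qcf (ha : ∀ n, 1 ≤ ra x n) (n : ℕ) :
    qcf x (n + 2) ≤ 2 * ra x n * qcf x (n + 1) := by
  rw [qcf]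
  linarith [qcf_succ_le_ra_mul_qcf_succ ha n, qcf_le_qcf_succ ha n]

lemma log_qcf_div_sub_log_ra_div_nonneg (ha : ∀ n, 1 ≤ ra x n) (n : ℕ) :
    0 ≤ log (qcf x (n + 2) : ℝ) / (qcf x (n + 1) : ℝ) -
      log (ra x n : ℝ) / (qcf x (n + 1) : ℝ) := by
  have ha₀ : (0 : ℝ) < ra x n := Int.cast_pos.2 (ha n)
  have haQ : (ra x n : ℝ) ≤ qcf x (n + 2) := by
    exact_mod_cast (le_mul_of_one_le_right (by linarith [ha n]) (one_le_qcf_succ ha n)).trans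
      (ra_mul_qcf_le_qcf_add_two ha n)
  rw [div_sub_div_same]
  exact div_nonneg (sub_nonneg.2 (log_le_log ha₀ haQ)) (by exact_mod_cast qcf_nonneg ha (n + 1))

lemma log_qcf_div_sub_log_ra_div_le (ha : ∀ n, 1 ≤ ra x n) (n : ℕ) :
    log (qcf x (n + 2) : ℝ) / (qcf x (n + 1) : ℝ) - log (ra x n : ℝ) / (qcf x (n + 1) : ℝ) ≤
      2 * √2 * √√2 * (√√2)⁻¹ ^ n := by
  have ha₀ : (0 : ℝ) < ra x n := Int.cast_pos.2 (ha n)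
  have hq₀ : (0 : ℝ) < qcf x (n + 1) := Int.cast_pos.2 (one_le_qcf_succ ha n)
  have hQ₀ : (0 : ℝ) < qcf x (n + 2) := Int.cast_pos.2 (one_le_qcf_succ ha (n + 1))
  have hQ : (qcf x (n + 2) : ℝ) ≤ 2 * ra x n * qcf x (n + 1) := by
    exact_mod_cast qcf_add_two_le_two_mul_ra_mul_qcf ha n
  have hgrowth := sqrt_sqrt_two_pow_le (q := fun n ↦ (qcf x (n + 1) : ℝ))
    (by exact_mod_cast one_le_qcf_succ ha 0) (by exact_mod_cast one_le_qcf_succ ha 1)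
    (fun n ↦ by exact_mod_cast two_mul_qcf_le_qcf_add_two ha (n + 1)) n
  refine (log_div_sub_log_div_le ha₀ hq₀ hQ₀ hQ).trans ?_
  rw [div_eq_mul_inv, mul_assoc _ √√2]
  gcongr
  rw [inv_pow, ← div_eq_mul_inv, inv_le_comm₀ (sqrt_pos.2 hq₀) (by positivity), inv_div,
    div_le_iff₀ (by positivity)]
  linarith

end Denominators

/-- Lemma 2.15: there is an absolute constant `C_1 > 0` such that for every
irrational `x ∈ (0,1)` and every `N ≥ 0`,
`|∑_{n=0}^{N} log(q_{n+1})/q_n − ∑_{n=0}^{N} log(a_{n+1})/q_n| < C_1`. -/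
theorem log_q_series_close_to_log_a_series :
    ∃ C : ℝ, 0 < C ∧ ∀ x : ℝ, Irrational x → x ∈ Set.Ioo (0 : ℝ) 1 → ∀ N : ℕ,
      |∑ n ∈ Finset.range (N + 1), Real.log (qcf x (n + 2) : ℝ) / (qcf x (n + 1) : ℝ) -
        ∑ n ∈ Finset.range (N + 1), Real.log (ra x n : ℝ) / (qcf x (n + 1) : ℝ)| < C := by
  have hr₀ : 0 < (√√2)⁻¹ := by positivity
  have hr₁ : (√√2)⁻¹ < 1 := inv_lt_one_of_one_lt₀ one_lt_sqrt_sqrt_two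
  refine ⟨2 * √2 * √√2 * (1 - (√√2)⁻¹)⁻¹, by have := sub_pos.2 hr₁; positivity, ?_⟩
  intro x hx hx01 N
  have ha := one_le_ra hx hx01
  rw [← Finset.sum_sub_distrib,
    abs_of_nonneg (Finset.sum_nonneg fun n _ ↦ log_qcf_div_sub_log_ra_div_nonneg ha n)]
  calc _ ≤ ∑ n ∈ Finset.range (N + 1), 2 * √2 * √√2 * (√√2)⁻¹ ^ n :=
        Finset.sum_le_sum fun n _ ↦ log_qcf_div_sub_log_ra_div_le ha n
    _ = 2 * √2 * √√2 * ∑ n ∈ Finset.range (N + 1), (√√2)⁻¹ ^ n := by rw [Finset.mul_sum]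
    _ < _ := by gcongr; exact geom_sum_lt_inv_one_sub hr₀ hr₁ _
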